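/- Let ω > 0, d > 0, R > 0, let Γ ⊆ ℝ³ be a measurable set contained in the closed ball of radius R about the origin with finite two-dimensional Hausdorff measure μH²(Γ) < ∞, and let z ∈ ℝ³. There exists a constant C = C(ω, d, μH²(Γ)) such that for every ρ ∈ (0,1], setting κ = 1/ρ and Γ_ρ = {z + ρ y : y ∈ Γ}, for every measurable ν : ℝ³ → ℝ³ with ‖ν(y)‖ ≤ 1 for all y, every bounded measurable ψ : ℝ³ → ℂ with |ψ| ≤ K on Γ_ρ, and every x ∈ ℝ³ with ‖x − z‖ ≥ d + R, | ∫_{Γ_ρ} ( D_y Φ(x, y)[ν(y)] − i κ Φ(x, y) ) ψ(y) dμH²(y) | ≤ C ρ K, where Φ(x,y) = e^{iω‖x−y‖}/(4π‖x−y‖) and D_yΦ(x,y)[ν(y)] is the Fréchet derivative of Φ in its second variable applied to ν(y). -/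

import Mathlib

/-!
Away from the obstacle, `‖x − y‖ ≥ d`, so `|Φ| ≤ 1/(4πd)` and `‖D_yΦ‖ ≤ (|ω| + 1/d)/(4πd)`;
with `κ = ρ⁻¹ ≥ 1` the integrand is therefore `O(ρ⁻¹ K)`. The boundary `Γ_ρ = z + ρΓ` has
`μH²(Γ_ρ) = ρ² μH²(Γ)`, and the product of the two is `O(ρ K)`.
-/

open MeasureTheory

/-- The outgoing fundamental solution `Φ(x,y) = e^{iω‖x−y‖}/(4π‖x−y‖)` of the
Helmholtz operator `−Δ−ω²` in `ℝ³`. -/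
noncomputable def helmholtzKernel (ω : ℝ) (x y : EuclideanSpace ℝ (Fin 3)) : ℂ :=
  Complex.exp (Complex.I * ((ω * ‖x - y‖ : ℝ) : ℂ)) / ((4 * Real.pi * ‖x - y‖ : ℝ) : ℂ)

open Complex Real Pointwise

section LayerGeometry

variable {E : Type*}

theorem le_norm_sub_add_smul [SeminormedAddCommGroup E] [NormedSpace ℝ E] {d R ρ : ℝ}
    {x z u : E} (hρ : 0 ≤ ρ) (hρ1 : ρ ≤ 1) (hu : ‖u‖ ≤ R) (hx : d + R ≤ ‖x - z‖) :
    d ≤ ‖x - (z + ρ • u)‖ := by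
  have hscaled : ‖ρ • u‖ ≤ R := by
    rw [norm_smul, Real.norm_of_nonneg hρ]
    nlinarith [norm_nonneg u]
  have hreverse : ‖x - z‖ - ‖ρ • u‖ ≤ ‖x - (z + ρ • u)‖ := by
    rw [← sub_sub]
    exact norm_sub_norm_le _ _
  linarith

variable [NormedAddCommGroup E] [NormedSpace ℝ E] [MeasurableSpace E] [BorelSpace E]

theorem hausdorffMeasure_image_add_smul {d : ℝ} (hd : 0 ≤ d) (z : E) {ρ : ℝ} (hρ : ρ ≠ 0)
    (s : Set E) : μH[d] ((fun y => z + ρ • y) '' s) = ‖ρ‖₊ ^ d • μH[d] s := by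
  rw [← Measure.hausdorffMeasure_smul₀ hd hρ s, ← Set.image_image (z + ·) (ρ • ·),
    Set.image_smul]
  exact (IsometryEquiv.addLeft z).hausdorffMeasure_image d (ρ • s)

theorem measureReal_hausdorffMeasure_image_add_smul {d : ℝ} (hd : 0 ≤ d) (z : E) {ρ : ℝ}
    (hρ : ρ ≠ 0) (s : Set E) :
    (μH[d]).real ((fun y => z + ρ • y) '' s) = |ρ| ^ d * (μH[d]).real s := by
  simp [measureReal_def, hausdorffMeasure_image_add_smul hd z hρ]

end LayerGeometry

theorem norm_fderiv_comp_norm_sub_le {E F : Type*} [NormedAddCommGroup E]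
    [InnerProductSpace ℝ E] [NormedAddCommGroup F] [NormedSpace ℝ F] {g : ℝ → F} {x y : E}
    (hxy : x ≠ y) (hg : DifferentiableAt ℝ g ‖x - y‖) :
    ‖fderiv ℝ (fun y => g ‖x - y‖) y‖ ≤ ‖deriv g ‖x - y‖‖ := by
  have hdist : DifferentiableAt ℝ (fun y => ‖x - y‖) y :=
    ((differentiableAt_const x).sub differentiableAt_id).norm ℝ (sub_ne_zero.2 hxy)
  have hlip : LipschitzWith 1 (fun y : E => ‖x - y‖) := by
    simpa [Function.comp_def] using
      lipschitzWith_one_norm.comp (IsometryEquiv.subLeft x).isometry.lipschitz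
  rw [fderiv_fun_comp y hg hdist, norm_deriv_eq_norm_fderiv]
  calc _ ≤ ‖fderiv ℝ g ‖x - y‖‖ * ‖fderiv ℝ (fun y => ‖x - y‖) y‖ :=
        ContinuousLinearMap.opNorm_comp_le _ _
    _ ≤ ‖fderiv ℝ g ‖x - y‖‖ * 1 := by
        gcongr
        simpa using norm_fderiv_le_of_lipschitz ℝ hlip
    _ = _ := mul_one _

/-- `helmholtzKernel ω x y` is definitionally `helmholtzRadial ω ‖x - y‖`. -/
noncomputable def helmholtzRadial (ω t : ℝ) : ℂ :=
  cexp (I * ((ω * t : ℝ) : ℂ)) / ((4 * π * t : ℝ) : ℂ)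

theorem hasDerivAt_helmholtzRadial (ω : ℝ) {t : ℝ} (ht : t ≠ 0) :
    HasDerivAt (helmholtzRadial ω)
      (cexp (I * ((ω * t : ℝ) : ℂ)) * (I * ω * t - 1) / (4 * π * t ^ 2)) t := by
  have hexp : HasDerivAt (fun t : ℝ => cexp (I * ((ω * t : ℝ) : ℂ)))
      (cexp (I * ((ω * t : ℝ) : ℂ)) * (I * ω)) t := by
    simpa using (((hasDerivAt_id t).const_mul ω).ofReal_comp.const_mul I).cexp
  have hlin : HasDerivAt (fun t : ℝ => ((4 * π * t : ℝ) : ℂ)) (4 * π) t := by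
    simpa using ((hasDerivAt_id t).const_mul (4 * π)).ofReal_comp
  refine (hexp.div hlin (by simp [ht, pi_ne_zero])).congr_deriv ?_
  have : (t : ℂ) ≠ 0 := by exact_mod_cast ht
  have : (π : ℂ) ≠ 0 := by exact_mod_cast pi_ne_zero
  push_cast
  field_simp

theorem norm_deriv_helmholtzRadial_le (ω : ℝ) {t : ℝ} (ht : 0 < t) :
    ‖deriv (helmholtzRadial ω) t‖ ≤ (|ω| + t⁻¹) / (4 * π * t) := by
  have hden : ‖(4 * π * t ^ 2 : ℂ)‖ = 4 * π * t ^ 2 := by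
    norm_cast
    exact Real.norm_of_nonneg (by positivity)
  have hnum : ‖I * ω * t - 1‖ ≤ |ω| * t + 1 := by
    refine (norm_sub_le _ _).trans_eq ?_
    simp [abs_of_pos ht]
  calc ‖deriv (helmholtzRadial ω) t‖ = ‖I * ω * t - 1‖ / (4 * π * t ^ 2) := by
        rw [(hasDerivAt_helmholtzRadial ω ht.ne').deriv, norm_div, norm_mul,
          norm_exp_I_mul_ofReal, one_mul, hden]
    _ ≤ (|ω| * t + 1) / (4 * π * t ^ 2) := by gcongr
    _ = (|ω| + t⁻¹) / (4 * π * t) := by field_simp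

theorem norm_helmholtzKernel (ω : ℝ) (x y : EuclideanSpace ℝ (Fin 3)) :
    ‖helmholtzKernel ω x y‖ = (4 * π * ‖x - y‖)⁻¹ := by
  rw [helmholtzKernel, norm_div, norm_exp_I_mul_ofReal, norm_real,
    Real.norm_of_nonneg (by positivity), one_div]

theorem norm_fderiv_helmholtzKernel_le (ω : ℝ) {x y : EuclideanSpace ℝ (Fin 3)} (hxy : x ≠ y) :
    ‖fderiv ℝ (helmholtzKernel ω x) y‖ ≤ (|ω| + ‖x - y‖⁻¹) / (4 * π * ‖x - y‖) :=
  have hr : 0 < ‖x - y‖ := norm_pos_iff.2 (sub_ne_zero.2 hxy)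
  (norm_fderiv_comp_norm_sub_le (g := helmholtzRadial ω) hxy
    (hasDerivAt_helmholtzRadial ω hr.ne').differentiableAt).trans
    (norm_deriv_helmholtzRadial_le ω hr)

theorem norm_combinedLayerIntegrand_le {ω d κ : ℝ} (hd : 0 < d) (hκ : 1 ≤ κ)
    {x y v : EuclideanSpace ℝ (Fin 3)} (hxy : d ≤ ‖x - y‖) (hv : ‖v‖ ≤ 1) :
    ‖fderiv ℝ (helmholtzKernel ω x) y v - I * (κ : ℂ) * helmholtzKernel ω x y‖
      ≤ κ * ((|ω| + d⁻¹ + 1) / (4 * π * d)) := by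
  have hr : 0 < ‖x - y‖ := hd.trans_le hxy
  have hdouble : ‖fderiv ℝ (helmholtzKernel ω x) y v‖ ≤ (|ω| + d⁻¹) / (4 * π * d) :=
    calc ‖fderiv ℝ (helmholtzKernel ω x) y v‖
        ≤ ‖fderiv ℝ (helmholtzKernel ω x) y‖ :=
          (ContinuousLinearMap.le_opNorm _ _).trans (mul_le_of_le_one_right (norm_nonneg _) hv)
      _ ≤ (|ω| + ‖x - y‖⁻¹) / (4 * π * ‖x - y‖) :=
          norm_fderiv_helmholtzKernel_le ω (sub_ne_zero.1 (norm_pos_iff.1 hr))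
      _ ≤ (|ω| + d⁻¹) / (4 * π * d) := by gcongr
  have hsingle : ‖I * (κ : ℂ) * helmholtzKernel ω x y‖ ≤ κ * (4 * π * d)⁻¹ := by
    rw [norm_mul, norm_mul, norm_I, one_mul, norm_real, Real.norm_of_nonneg (by linarith),
      norm_helmholtzKernel]
    gcongr
  have hκdouble : (|ω| + d⁻¹) / (4 * π * d) ≤ κ * ((|ω| + d⁻¹) / (4 * π * d)) :=
    le_mul_of_one_le_left (by positivity) hκ
  calc _ ≤ (|ω| + d⁻¹) / (4 * π * d) + κ * (4 * π * d)⁻¹ :=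
        (norm_sub_le _ _).trans (add_le_add hdouble hsingle)
    _ ≤ κ * ((|ω| + d⁻¹) / (4 * π * d)) + κ * (4 * π * d)⁻¹ := by linarith
    _ = κ * ((|ω| + d⁻¹ + 1) / (4 * π * d)) := by ring

theorem small_obstacle_layer_potential_bound_general (ω d R : ℝ) (hd : 0 < d)
    (Γ : Set (EuclideanSpace ℝ (Fin 3)))
    (hΓsub : Γ ⊆ Metric.closedBall (0 : EuclideanSpace ℝ (Fin 3)) R)
    (hΓf : μH[2] Γ < ⊤)
    (z : EuclideanSpace ℝ (Fin 3)) :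
    ∃ C : ℝ, 0 < C ∧
      ∀ ρ : ℝ, 0 < ρ → ρ ≤ 1 →
        ∀ ν : EuclideanSpace ℝ (Fin 3) → EuclideanSpace ℝ (Fin 3), Measurable ν →
          (∀ y, ‖ν y‖ ≤ 1) →
        ∀ K : ℝ, 0 ≤ K →
        ∀ ψ : EuclideanSpace ℝ (Fin 3) → ℂ, Measurable ψ →
          Bornology.IsBounded (Set.range ψ) →
          (∀ y ∈ (fun y : EuclideanSpace ℝ (Fin 3) => z + ρ • y) '' Γ, ‖ψ y‖ ≤ K) →
        ∀ x : EuclideanSpace ℝ (Fin 3), d + R ≤ ‖x - z‖ →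
          ‖∫ y in (fun y : EuclideanSpace ℝ (Fin 3) => z + ρ • y) '' Γ,
              (fderiv ℝ (fun y' => helmholtzKernel ω x y') y (ν y)
                - Complex.I * ((ρ⁻¹ : ℝ) : ℂ) * helmholtzKernel ω x y) * ψ y ∂μH[2]‖
            ≤ C * ρ * K := by
  set M := (|ω| + d⁻¹ + 1) / (4 * π * d)
  refine ⟨M * ((μH[2]).real Γ + 1), by positivity, ?_⟩
  intro ρ hρ hρ1 ν _ hν K hK ψ _ _ hψK x hx
  set Γρ := (fun y : EuclideanSpace ℝ (Fin 3) => z + ρ • y) '' Γ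
  have hΓρ_finite : μH[2] Γρ < ⊤ := by
    rw [hausdorffMeasure_image_add_smul zero_le_two z hρ.ne']
    exact ENNReal.mul_lt_top (by simp) hΓf
  have hintegrand : ∀ y ∈ Γρ, ‖(fderiv ℝ (helmholtzKernel ω x) y (ν y)
      - I * ((ρ⁻¹ : ℝ) : ℂ) * helmholtzKernel ω x y) * ψ y‖ ≤ ρ⁻¹ * M * K := by
    rintro _ ⟨u, hu, rfl⟩
    have hdist := le_norm_sub_add_smul hρ.le hρ1 (mem_closedBall_zero_iff.1 (hΓsub hu)) hx
    rw [norm_mul]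
    exact mul_le_mul (norm_combinedLayerIntegrand_le hd ((one_le_inv₀ hρ).2 hρ1) hdist (hν _))
      (hψK _ (Set.mem_image_of_mem _ hu)) (norm_nonneg _) (by positivity)
  calc _ ≤ ρ⁻¹ * M * K * (μH[2]).real Γρ :=
        norm_setIntegral_le_of_norm_le_const hΓρ_finite hintegrand
    _ = M * (μH[2]).real Γ * ρ * K := by
        rw [measureReal_hausdorffMeasure_image_add_smul zero_le_two z hρ.ne', Real.rpow_two,
          sq_abs]
        field_simp
    _ ≤ M * ((μH[2]).real Γ + 1) * ρ * K := by gcongr; linarith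

/-- `O(ρ)` bound for the combined double- and single-layer potential `DL − iκSL`
with coupling parameter `κ = ρ⁻¹` on the boundary `Γ_ρ = z + ρΓ` of a small obstacle,
at observation points `x` with `‖x − z‖ ≥ d + R`. -/
theorem small_obstacle_layer_potential_bound (ω d R : ℝ) (hω : 0 < ω) (hd : 0 < d)
    (hR : 0 < R)
    (Γ : Set (EuclideanSpace ℝ (Fin 3)))
    (hΓsub : Γ ⊆ Metric.closedBall (0 : EuclideanSpace ℝ (Fin 3)) R)
    (hΓm : MeasurableSet Γ) (hΓf : μH[2] Γ < ⊤)
    (z : EuclideanSpace ℝ (Fin 3)) :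
    ∃ C : ℝ, 0 < C ∧
      ∀ ρ : ℝ, 0 < ρ → ρ ≤ 1 →
        ∀ ν : EuclideanSpace ℝ (Fin 3) → EuclideanSpace ℝ (Fin 3), Measurable ν →
          (∀ y, ‖ν y‖ ≤ 1) →
        ∀ K : ℝ, 0 ≤ K →
        ∀ ψ : EuclideanSpace ℝ (Fin 3) → ℂ, Measurable ψ →
          Bornology.IsBounded (Set.range ψ) →
          (∀ y ∈ (fun y : EuclideanSpace ℝ (Fin 3) => z + ρ • y) '' Γ, ‖ψ y‖ ≤ K) →
        ∀ x : EuclideanSpace ℝ (Fin 3), d + R ≤ ‖x - z‖ →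
          ‖∫ y in (fun y : EuclideanSpace ℝ (Fin 3) => z + ρ • y) '' Γ,
              (fderiv ℝ (fun y' => helmholtzKernel ω x y') y (ν y)
                - Complex.I * ((ρ⁻¹ : ℝ) : ℂ) * helmholtzKernel ω x y) * ψ y ∂μH[2]‖
            ≤ C * ρ * K :=
  small_obstacle_layer_potential_bound_general ω d R hd Γ hΓsub hΓf z
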